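/- arXiv:0806.3686 — 2 statements merged into one kernel-verified Lean document; each statement's English description precedes it below -/
import Mathlib

section
/- Let μ be an atomless probability measure on ℝ with cumulative distribution function F, let N ≥ 1, and let μ_N be the probability measure on ℝ^N with density (t_1, …, t_N) ↦ N^N · 1_{t_1 ≥ ⋯ ≥ t_N} · ∏_{i=1}^N F(t_N)/F(t_i) with respect to μ^{⊗N} (density 0 where some F(t_i) = 0). Then for every real t with F(t) > 0, the μ_N-measure of the set of vectors all of whose coordinates are strictly greater than t equals ∫_0^{−log F(t)} (N^N/(N−1)!) · u^{N−1} e^{−Nu} du. -/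
open MeasureTheory
open scoped ENNReal

/-- The cumulative distribution function of a measure on `ℝ`. -/
noncomputable def cdf' (μ : Measure ℝ) : ℝ → ℝ := fun x => (μ (Set.Iic x)).toReal

/-!
On the cone `t₁ ≥ ⋯ ≥ t_N`, the density times `1{t_N > t}` equals
`N^N (minᵢ F(tᵢ))^N ∏ᵢ 1{tᵢ > t}/F(tᵢ)`, a symmetric function of the coordinates. Since
`μ^{⊗N}`-almost every vector has distinct coordinates, its integral over the cone is `1/N!` times
its integral over all of `ℝ^N`. Writing `(minᵢ F(tᵢ))^N = ∫₀¹ N x^{N-1} ∏ᵢ 1{x < F(tᵢ)} dx`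
turns the integrand into a product, and as `F₊μ` is uniform on `(0, 1]`, each factor
`1{tᵢ > t, F(tᵢ) > x}/F(tᵢ)` integrates to `∫_{max(x, F(t))}^1 dz/z = -log max(x, F(t))`.
The substitution `x = e^{-u}` and the derivative of `u^N e^{-Nu}` turn the remaining integral
`∫₀¹ N x^{N-1} (-log max(x, F(t)))^N dx` into the Gamma integral.
-/

open scoped Nat
open Set Filter ProbabilityTheory

section Cdf

lemma cdf'_eq_cdf (μ : Measure ℝ) [IsProbabilityMeasure μ] : cdf' μ = cdf μ :=
  funext fun x => (cdf_eq_real μ x).symm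

variable {μ : Measure ℝ} [IsProbabilityMeasure μ]

lemma monotone_cdf' : Monotone (cdf' μ) := cdf'_eq_cdf μ ▸ monotone_cdf μ

lemma measurable_cdf' : Measurable (cdf' μ) := monotone_cdf'.measurable

lemma cdf'_le_one (x : ℝ) : cdf' μ x ≤ 1 := cdf'_eq_cdf μ ▸ cdf_le_one μ x

lemma ofReal_cdf' (x : ℝ) : ENNReal.ofReal (cdf' μ x) = μ (Iic x) := by
  rw [cdf'_eq_cdf, ofReal_cdf]

variable [NullSingletonClass μ]

lemma continuous_cdf' : Continuous (cdf' μ) := by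
  rw [cdf'_eq_cdf, continuous_iff_continuousAt]
  intro x
  have hleft : Function.leftLim (cdf μ) x = cdf μ x := by
    have h := (cdf μ).measure_singleton x
    rw [measure_cdf, measure_singleton, eq_comm, ENNReal.ofReal_eq_zero, sub_nonpos] at h
    exact le_antisymm ((monotone_cdf μ).leftLim_le le_rfl) h
  refine continuousAt_iff_continuous_left_right.2 ⟨?_, (cdf μ).right_continuous x⟩
  exact continuousWithinAt_Iio_iff_Iic.1
    ((monotone_cdf μ).continuousWithinAt_Iio_iff_leftLim_eq.2 hleft)

/-- A nonempty sublevel set of the continuous `F` is `Iic b` with `F b = y`. -/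
lemma measure_cdf'_le {y : ℝ} (hy0 : 0 ≤ y) (hy1 : y < 1) :
    μ {x | cdf' μ x ≤ y} = ENNReal.ofReal y := by
  set S := {x | cdf' μ x ≤ y}
  rcases S.eq_empty_or_nonempty with hS | hS
  · obtain rfl : y = 0 := by
      refine hy0.antisymm' (le_of_not_gt fun hy => ?_)
      obtain ⟨x, hx⟩ := ((cdf'_eq_cdf μ ▸ tendsto_cdf_atBot μ).eventually_lt_const hy).exists
      exact hS.subset (show x ∈ S from hx.le)
    simp [hS]
  have hbdd : BddAbove S := by
    obtain ⟨b, hb⟩ := ((cdf'_eq_cdf μ ▸ tendsto_cdf_atTop μ).eventually_const_lt hy1).exists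
    exact ⟨b, fun x hx => le_of_not_gt fun hbx => (hb.trans_le (monotone_cdf' hbx.le)).not_ge hx⟩
  set b := sSup S
  have hbS : b ∈ S := (isClosed_le continuous_cdf' continuous_const).csSup_mem hS hbdd
  have hSb : S = Iic b :=
    Subset.antisymm (fun x hx => le_csSup hbdd hx) fun x hx => (monotone_cdf' hx).trans hbS
  have hFb : cdf' μ b = y := by
    refine le_antisymm hbS (ge_of_tendsto (continuous_cdf'.continuousWithinAt (s := Ioi b))
      (eventually_nhdsWithin_of_forall fun x hx => ?_))
    exact le_of_not_ge fun hxy => (not_le.2 hx) (le_csSup hbdd hxy)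
  rw [hSb, ← ofReal_cdf', hFb]

lemma map_cdf' : μ.map (cdf' μ) = volume.restrict (Ioc 0 1) := by
  refine Measure.ext_of_Iic _ _ fun y => ?_
  rw [Measure.map_apply measurable_cdf' measurableSet_Iic,
    Measure.restrict_apply measurableSet_Iic]
  rcases lt_or_ge y 0 with hy | hy
  · have hF : cdf' μ ⁻¹' Iic y = ∅ := eq_empty_of_forall_notMem fun x hx =>
      hy.not_ge (ENNReal.toReal_nonneg.trans hx)
    have hI : Iic y ∩ Ioc 0 1 = ∅ := eq_empty_of_forall_notMem fun x hx =>
      hy.not_ge (hx.2.1.le.trans hx.1)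
    rw [hF, hI, measure_empty, measure_empty]
  rcases lt_or_ge y 1 with hy1 | hy1
  · rw [show cdf' μ ⁻¹' Iic y = {x | cdf' μ x ≤ y} from rfl, measure_cdf'_le hy hy1,
      Iic_inter_Ioc_of_le hy1.le, Real.volume_Ioc, sub_zero]
  · have hF : cdf' μ ⁻¹' Iic y = univ := eq_univ_of_forall fun x => (cdf'_le_one x).trans hy1
    rw [hF, measure_univ, inter_eq_right.2 fun x hx => hx.2.trans hy1, Real.volume_Ioc, sub_zero,
      ENNReal.ofReal_one]

lemma measure_cdf'_eq (a : ℝ) : μ {x | cdf' μ x = a} = 0 := by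
  change μ (cdf' μ ⁻¹' {a}) = 0
  rw [← Measure.map_apply measurable_cdf' (measurableSet_singleton a), map_cdf']
  simp

lemma lintegral_comp_cdf' {g : ℝ → ℝ≥0∞} (hg : Measurable g) :
    ∫⁻ x, g (cdf' μ x) ∂μ = ∫⁻ z in Ioc 0 1, g z := by
  rw [← map_cdf' (μ := μ), lintegral_map hg measurable_cdf']

end Cdf

section Calculus

variable {N : ℕ}

lemma lintegral_Ioc_inv {b : ℝ} (hb : 0 < b) :
    ∫⁻ z in Ioc b 1, ENNReal.ofReal z⁻¹ = ENNReal.ofReal (-Real.log b) := by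
  rcases le_or_gt 1 b with hb1 | hb1
  · rw [Ioc_eq_empty hb1.not_gt, Measure.restrict_empty, lintegral_zero_measure, eq_comm,
      ENNReal.ofReal_eq_zero, neg_nonpos]
    exact Real.log_nonneg hb1
  have hcont : ContinuousOn (fun z : ℝ => z⁻¹) (Icc b 1) :=
    continuousOn_inv₀.mono fun z hz => (hb.trans_le hz.1).ne'
  rw [← ofReal_integral_eq_lintegral_ofReal (hcont.integrableOn_Icc.mono_set Ioc_subset_Icc_self)
      ((ae_restrict_iff' measurableSet_Ioc).2 (ae_of_all _ fun z hz =>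
        inv_nonneg.2 (hb.trans hz.1).le)),
    ← intervalIntegral.integral_of_le hb1.le, integral_inv_of_pos hb one_pos, one_div,
    Real.log_inv]

lemma integral_natCast_mul_pow_pred (hN : 1 ≤ N) (m : ℝ) :
    ∫ x in 0..m, N * x ^ (N - 1) = m ^ N := by
  rw [intervalIntegral.integral_const_mul, integral_pow, Nat.sub_add_cancel hN, Nat.cast_sub hN,
    Nat.cast_one, sub_add_cancel, zero_pow (by omega), sub_zero]
  field_simp

lemma lintegral_Ioo_natCast_mul_pow_pred (hN : 1 ≤ N) {m : ℝ} (hm : 0 ≤ m) :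
    ∫⁻ x in Ioo 0 m, ENNReal.ofReal (N * x ^ (N - 1)) = ENNReal.ofReal (m ^ N) := by
  have hcont : Continuous fun x : ℝ => N * x ^ (N - 1) := by fun_prop
  rw [← ofReal_integral_eq_lintegral_ofReal (hcont.integrableOn_Icc.mono_set Ioo_subset_Icc_self)
      ((ae_restrict_iff' measurableSet_Ioo).2 (ae_of_all _ fun x hx => by
        have := hx.1.le; positivity)),
    ← integral_Ioc_eq_integral_Ioo, ← intervalIntegral.integral_of_le hm,
    integral_natCast_mul_pow_pred hN]

lemma integral_natCast_mul_pow_mul_neg_log_pow (hN : 1 ≤ N) {c : ℝ} (hc : 0 < c) :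
    ∫ x in c..1, N * x ^ (N - 1) * (-Real.log x) ^ N =
      ∫ u in 0..-Real.log c, N * u ^ N * Real.exp (-N * u) := by
  have hsub := intervalIntegral.integral_comp_mul_deriv_of_deriv_nonpos
    (g := fun x : ℝ => N * x ^ (N - 1) * (-Real.log x) ^ N) (f := fun u => Real.exp (-u))
    (f' := fun u => -Real.exp (-u)) (a := 0) (b := -Real.log c) (by fun_prop)
    (fun u _ => by simpa using (hasDerivAt_neg u).exp)
    (fun u _ => by simp [(Real.exp_pos _).le])
  rw [neg_zero, Real.exp_zero, neg_neg, Real.exp_log hc,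
    intervalIntegral.integral_symm c 1] at hsub
  rw [← neg_eq_iff_eq_neg.2 hsub, ← intervalIntegral.integral_neg]
  refine intervalIntegral.integral_congr fun u _ => ?_
  have hexp : Real.exp (-u) ^ (N - 1) * Real.exp (-u) = Real.exp (-N * u) := by
    rw [← pow_succ, Nat.sub_add_cancel hN, ← Real.exp_nat_mul, mul_neg, neg_mul]
  simp only [Function.comp_apply, Real.log_exp, neg_neg]
  linear_combination (N * u ^ N) * hexp

lemma integral_natCast_mul_pow_sub_mul_exp (hN : 1 ≤ N) (s : ℝ) :
    ∫ u in 0..s, (N * u ^ (N - 1) * Real.exp (-N * u) - N * u ^ N * Real.exp (-N * u)) =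
      s ^ N * Real.exp (-N * s) := by
  rw [intervalIntegral.integral_eq_sub_of_hasDerivAt (f := fun u => u ^ N * Real.exp (-N * u))]
  · simp [zero_pow (by omega : N ≠ 0)]
  · intro u _
    exact ((hasDerivAt_pow N u).mul ((hasDerivAt_id' u).const_mul (-(N : ℝ))).exp).congr_deriv
      (by ring)
  · exact (by fun_prop : Continuous _).intervalIntegrable _ _

lemma continuous_natCast_mul_pow_mul_neg_log_max_pow (N : ℕ) {c : ℝ} (hc : 0 < c) :
    Continuous fun x : ℝ => N * x ^ (N - 1) * (-Real.log (max x c)) ^ N :=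
  (continuous_const.mul (continuous_pow _)).mul (((continuous_id.max continuous_const).log
    fun x => (hc.trans_le (le_max_right x c)).ne').neg.pow N)

lemma integral_natCast_mul_pow_mul_neg_log_max_pow (hN : 1 ≤ N) {c : ℝ} (hc : 0 < c)
    (hc1 : c ≤ 1) :
    ∫ x in 0..1, N * x ^ (N - 1) * (-Real.log (max x c)) ^ N =
      ∫ u in 0..-Real.log c, N * u ^ (N - 1) * Real.exp (-N * u) := by
  have hcont := continuous_natCast_mul_pow_mul_neg_log_max_pow N hc
  have hlow : ∫ x in 0..c, N * x ^ (N - 1) * (-Real.log (max x c)) ^ N =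
      ∫ x in 0..c, N * x ^ (N - 1) * (-Real.log c) ^ N :=
    intervalIntegral.integral_congr fun x hx => by
      rw [uIcc_of_le hc.le] at hx
      rw [max_eq_right hx.2]
  have hhigh : ∫ x in c..1, N * x ^ (N - 1) * (-Real.log (max x c)) ^ N =
      ∫ x in c..1, N * x ^ (N - 1) * (-Real.log x) ^ N :=
    intervalIntegral.integral_congr fun x hx => by
      rw [uIcc_of_le hc1] at hx
      rw [max_eq_left hx.1]
  have hcN : Real.exp (-N * -Real.log c) = c ^ N := by
    rw [neg_mul_neg, Real.exp_nat_mul, Real.exp_log hc]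
  have hparts := integral_natCast_mul_pow_sub_mul_exp hN (-Real.log c)
  rw [intervalIntegral.integral_sub ((by fun_prop : Continuous _).intervalIntegrable _ _)
    ((by fun_prop : Continuous _).intervalIntegrable _ _), hcN] at hparts
  rw [← intervalIntegral.integral_add_adjacent_intervals (hcont.intervalIntegrable 0 c)
      (hcont.intervalIntegrable c 1), hlow, hhigh, intervalIntegral.integral_mul_const,
    integral_natCast_mul_pow_pred hN, integral_natCast_mul_pow_mul_neg_log_pow hN hc]
  linear_combination -hparts

lemma lintegral_Ioc_natCast_mul_pow_mul_neg_log_max_pow (N : ℕ) {c : ℝ} (hc : 0 < c)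
    (hc1 : c ≤ 1) :
    ∫⁻ x in Ioc 0 1, ENNReal.ofReal (N * x ^ (N - 1)) *
        ENNReal.ofReal (-Real.log (max x c)) ^ N =
      ENNReal.ofReal (∫ x in 0..1, N * x ^ (N - 1) * (-Real.log (max x c)) ^ N) := by
  have hlog {x : ℝ} (hx : x ∈ Ioc 0 1) : 0 ≤ -Real.log (max x c) :=
    neg_nonneg.2 (Real.log_nonpos (hc.le.trans (le_max_right x c)) (max_le hx.2 hc1))
  have hint : IntegrableOn (fun x : ℝ => N * x ^ (N - 1) * (-Real.log (max x c)) ^ N) (Ioc 0 1) :=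
    (continuous_natCast_mul_pow_mul_neg_log_max_pow N hc).integrableOn_Icc.mono_set
      Ioc_subset_Icc_self
  rw [intervalIntegral.integral_of_le zero_le_one, ofReal_integral_eq_lintegral_ofReal hint
    ((ae_restrict_iff' measurableSet_Ioc).2 (ae_of_all _ fun x hx => by
      have := hlog hx; have := hx.1.le; positivity))]
  refine setLIntegral_congr_fun measurableSet_Ioc fun x hx => ?_
  have := hx.1.le
  rw [← ENNReal.ofReal_pow (hlog hx), ← ENNReal.ofReal_mul (by positivity)]

end Calculus

lemma measurableSet_antitone {ι : Type*} [Countable ι] [Preorder ι] :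
    MeasurableSet {v : ι → ℝ | Antitone v} := by
  simp only [Antitone, ofPred_forall]
  exact .iInter fun i => .iInter fun j => .iInter fun _ =>
    measurableSet_le (measurable_pi_apply j) (measurable_pi_apply i)

section PiMeasure

variable {ι : Type*} [Fintype ι] {μ : Measure ℝ} [IsProbabilityMeasure μ]

lemma lintegral_pi_prod_comp (g : ℝ → ℝ≥0∞) (hg : Measurable g) :
    ∫⁻ v, ∏ i, g (v i) ∂Measure.pi (fun _ : ι => μ) = (∫⁻ y, g y ∂μ) ^ Fintype.card ι := by
  rw [lintegral_prod_eq_prod_lintegral_of_indepFun _ _ (iIndepFun_pi fun _ => hg.aemeasurable)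
    fun i => hg.comp (measurable_pi_apply i)]
  simp_rw [(measurePreserving_eval (fun _ : ι => μ) _).lintegral_comp hg]
  rw [Finset.prod_const, Finset.card_univ]

variable [NullSingletonClass μ]

lemma pi_setOf_apply_eq_apply {i j : ι} (hij : i ≠ j) :
    Measure.pi (fun _ : ι => μ) {v | v i = v j} = 0 := by
  have hmap := ((iIndepFun_pi (μ := fun _ : ι => μ) (X := fun _ => id)
    fun _ => aemeasurable_id).indepFun hij).map_prod_eq_prod_map_map
    (measurable_pi_apply i).aemeasurable (measurable_pi_apply j).aemeasurable
  simp only [(measurePreserving_eval (fun _ : ι => μ) _).map_eq] at hmap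
  have hdiag : MeasurableSet {p : ℝ × ℝ | p.1 = p.2} := measurableSet_diagonal
  change Measure.pi (fun _ : ι => μ) ((fun v : ι → ℝ => (v i, v j)) ⁻¹' {p | p.1 = p.2}) = 0
  rw [← Measure.map_apply (by fun_prop) hdiag, hmap, Measure.prod_apply hdiag]
  simp [preimage, measure_singleton]

lemma ae_injective_pi : ∀ᵐ v ∂Measure.pi (fun _ : ι => μ), Function.Injective v := by
  have hsub : {v : ι → ℝ | ¬Function.Injective v} ⊆ ⋃ (i) (j) (_ : i ≠ j), {v | v i = v j} := by
    intro v hv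
    simp only [Function.Injective, not_forall] at hv
    obtain ⟨i, j, hij, hne⟩ := hv
    exact mem_iUnion₂.2 ⟨i, j, mem_iUnion.2 ⟨hne, hij⟩⟩
  exact measure_mono_null hsub (measure_iUnion_null fun i => measure_iUnion_null fun j =>
    measure_iUnion_null fun hij => pi_setOf_apply_eq_apply hij)

end PiMeasure

section Symmetrization

variable {n : ℕ} {f : (Fin n → ℝ) → ℝ≥0∞}

lemma existsUnique_antitone_comp_perm {v : Fin n → ℝ} (hv : Function.Injective v) :
    ∃! σ : Equiv.Perm (Fin n), Antitone (v ∘ σ) := by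
  have hsorted : Antitone (v ∘ Fin.revPerm.trans (Tuple.sort v)) :=
    (Tuple.monotone_sort v).comp_antitone Fin.rev_anti
  refine ⟨_, hsorted, fun σ hσ => Equiv.ext fun i => hv ?_⟩
  exact congrFun (Tuple.unique_antitone hσ hsorted) i

lemma setLIntegral_antitone_comp_perm (μ : Measure ℝ) [SigmaFinite μ]
    (hsymm : ∀ (σ : Equiv.Perm (Fin n)) v, f (v ∘ σ) = f v) (σ : Equiv.Perm (Fin n)) :
    ∫⁻ v in {v | Antitone (v ∘ σ)}, f v ∂Measure.pi (fun _ => μ) =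
      ∫⁻ v in {v | Antitone v}, f v ∂Measure.pi (fun _ => μ) := by
  have he := measurePreserving_arrowCongr' (fun _ => μ) (fun _ => μ) σ.symm (.refl ℝ)
    fun _ => .id μ
  have hcomp (v : Fin n → ℝ) : MeasurableEquiv.arrowCongr' σ.symm (.refl ℝ) v = v ∘ σ := rfl
  rw [← he.setLIntegral_comp_preimage_emb (MeasurableEquiv.measurableEmbedding _) f
    {v | Antitone v}]
  simp only [hcomp, hsymm]
  rfl

lemma lintegral_pi_eq_factorial_mul_setLIntegral_antitone (μ : Measure ℝ)
    [IsProbabilityMeasure μ] [NullSingletonClass μ] (hf : Measurable f)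
    (hsymm : ∀ (σ : Equiv.Perm (Fin n)) v, f (v ∘ σ) = f v) :
    ∫⁻ v, f v ∂Measure.pi (fun _ => μ) =
      n ! * ∫⁻ v in {v | Antitone v}, f v ∂Measure.pi (fun _ => μ) := by
  have hmeas (σ : Equiv.Perm (Fin n)) : MeasurableSet {v : Fin n → ℝ | Antitone (v ∘ σ)} :=
    measurableSet_antitone.preimage (measurable_pi_lambda _ fun i => measurable_pi_apply (σ i))
  have hsum : ∀ᵐ v ∂Measure.pi (fun _ => μ),
      f v = ∑ σ : Equiv.Perm (Fin n), {v | Antitone (v ∘ σ)}.indicator f v := by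
    filter_upwards [ae_injective_pi (ι := Fin n) (μ := μ)] with v hv
    obtain ⟨σ₀, hσ₀, huniq⟩ := existsUnique_antitone_comp_perm hv
    rw [Finset.sum_eq_single_of_mem σ₀ (Finset.mem_univ _) fun σ _ hσ =>
      indicator_of_notMem (fun h => hσ (huniq σ h)) _, indicator_of_mem hσ₀]
  rw [lintegral_congr_ae hsum, lintegral_finsetSum _ fun σ _ => hf.indicator (hmeas σ)]
  simp_rw [lintegral_indicator (hmeas _), setLIntegral_antitone_comp_perm μ hsymm]
  rw [Finset.sum_const, Finset.card_univ, Fintype.card_perm, Fintype.card_fin, nsmul_eq_mul]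

end Symmetrization

section TailWeight

variable (μ : Measure ℝ) (t : ℝ) {N : ℕ}

noncomputable def invCdfAbove (x : ℝ) : ℝ → ℝ≥0∞ :=
  {y | t < y ∧ x < cdf' μ y}.indicator fun y => ENNReal.ofReal (cdf' μ y)⁻¹

lemma measurable_invCdfAbove [IsProbabilityMeasure μ] :
    Measurable fun p : ℝ × ℝ => invCdfAbove μ t p.1 p.2 := by
  refine Measurable.indicator (measurable_cdf'.comp measurable_snd).inv.ennreal_ofReal ?_
  exact (measurableSet_lt measurable_const measurable_snd).inter
    (measurableSet_lt measurable_fst (measurable_cdf'.comp measurable_snd))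

lemma lintegral_invCdfAbove [IsProbabilityMeasure μ] [NullSingletonClass μ] {x : ℝ}
    (hx : 0 < x) :
    ∫⁻ y, invCdfAbove μ t x y ∂μ = ENNReal.ofReal (-Real.log (max x (cdf' μ t))) := by
  set b := max x (cdf' μ t)
  have hb : 0 < b := lt_max_of_lt_left hx
  have hae : invCdfAbove μ t x =ᵐ[μ]
      fun y => (Ioi b).indicator (fun z => ENNReal.ofReal z⁻¹) (cdf' μ y) := by
    filter_upwards [measure_eq_zero_iff_ae_notMem.1 (measure_cdf'_eq (μ := μ) (cdf' μ t))]
      with y hy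
    have hmem : t < y ∧ x < cdf' μ y ↔ b < cdf' μ y := by
      refine ⟨fun h => max_lt h.2 ((monotone_cdf' h.1.le).lt_of_ne' hy),
        fun h => ⟨?_, (le_max_left _ _).trans_lt h⟩⟩
      exact lt_of_not_ge fun hyt => ((le_max_right _ _).trans_lt h).not_ge (monotone_cdf' hyt)
    simp only [invCdfAbove, indicator, mem_ofPred_eq, mem_Ioi, hmem]
  rw [lintegral_congr_ae hae,
    lintegral_comp_cdf' (measurable_inv.ennreal_ofReal.indicator measurableSet_Ioi),
    lintegral_indicator measurableSet_Ioi, Measure.restrict_restrict measurableSet_Ioi,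
    inter_comm, Ioc_inter_Ioi, max_eq_right hb.le, lintegral_Ioc_inv hb]

/-- Layer-cake form of `(minᵢ F(vᵢ))^N ∏ᵢ 1{vᵢ > t} / F(vᵢ)`: for each level `x` the integrand
factorises over the coordinates. -/
noncomputable def tailWeight (N : ℕ) (v : Fin N → ℝ) : ℝ≥0∞ :=
  ∫⁻ x in Ioc 0 1, ENNReal.ofReal (N * x ^ (N - 1)) * ∏ i, invCdfAbove μ t x (v i)

lemma measurable_tailWeight_integrand [IsProbabilityMeasure μ] :
    Measurable fun p : (Fin N → ℝ) × ℝ =>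
      ENNReal.ofReal (N * p.2 ^ (N - 1)) * ∏ i, invCdfAbove μ t p.2 (p.1 i) := by
  refine ((by fun_prop : Measurable fun x : ℝ => ENNReal.ofReal (N * x ^ (N - 1))).comp
    measurable_snd).mul ?_
  exact Finset.measurable_prod _ fun i _ => (measurable_invCdfAbove μ t).comp
    (measurable_snd.prodMk ((measurable_pi_apply i).comp measurable_fst))

lemma measurable_tailWeight [IsProbabilityMeasure μ] : Measurable (tailWeight μ t N) :=
  (measurable_tailWeight_integrand μ t).lintegral_prod_right'

lemma tailWeight_comp_perm (σ : Equiv.Perm (Fin N)) (v : Fin N → ℝ) :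
    tailWeight μ t N (v ∘ σ) = tailWeight μ t N v := by
  simp only [tailWeight, Function.comp_apply]
  congr! 3 with x
  exact Equiv.prod_comp σ fun i => invCdfAbove μ t x (v i)

lemma tailWeight_eq_zero {v : Fin N → ℝ} {i : Fin N} (hi : v i ≤ t) :
    tailWeight μ t N v = 0 := by
  have hprod (x : ℝ) : ∏ j, invCdfAbove μ t x (v j) = 0 :=
    Finset.prod_eq_zero (Finset.mem_univ i) (indicator_of_notMem (fun h => hi.not_gt h.1) _)
  simp [tailWeight, hprod]

lemma tailWeight_eq_of_isMin [IsProbabilityMeasure μ] (hN : 1 ≤ N) {v : Fin N → ℝ}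
    (ht : ∀ i, t < v i) {j : Fin N} (hj : ∀ i, cdf' μ (v j) ≤ cdf' μ (v i)) :
    tailWeight μ t N v = ENNReal.ofReal (cdf' μ (v j) ^ N * ∏ i, (cdf' μ (v i))⁻¹) := by
  set m := cdf' μ (v j)
  have hintegrand (x : ℝ) :
      ENNReal.ofReal (N * x ^ (N - 1)) * ∏ i, invCdfAbove μ t x (v i) = (Iio m).indicator
        (fun x => ENNReal.ofReal (N * x ^ (N - 1)) * ENNReal.ofReal (∏ i, (cdf' μ (v i))⁻¹)) x := by
    by_cases hx : x ∈ Iio m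
    · rw [indicator_of_mem hx, ENNReal.ofReal_prod_of_nonneg (f := fun i => (cdf' μ (v i))⁻¹)
        fun i _ => inv_nonneg.2 ENNReal.toReal_nonneg]
      exact congrArg _ (Finset.prod_congr rfl fun i _ => indicator_of_mem
        (s := {y | t < y ∧ x < cdf' μ y}) ⟨ht i, (mem_Iio.1 hx).trans_le (hj i)⟩ _)
    · rw [indicator_of_notMem hx, Finset.prod_eq_zero (Finset.mem_univ j)
        (indicator_of_notMem (s := {y | t < y ∧ x < cdf' μ y}) (fun h => hx h.2) _), mul_zero]
  have hlevels : Iio m ∩ Ioc 0 1 = Ioo 0 m := by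
    ext x
    simp only [mem_inter_iff, mem_Iio, mem_Ioc, mem_Ioo]
    exact ⟨fun h => ⟨h.2.1, h.1⟩, fun h => ⟨h.2, h.1, h.2.le.trans (cdf'_le_one _)⟩⟩
  have hm : 0 ≤ m := ENNReal.toReal_nonneg
  simp only [tailWeight, hintegrand]
  rw [lintegral_indicator measurableSet_Iio, Measure.restrict_restrict measurableSet_Iio,
    hlevels, lintegral_mul_const' _ _ ENNReal.ofReal_ne_top,
    lintegral_Ioo_natCast_mul_pow_pred hN hm, ← ENNReal.ofReal_mul (by positivity)]

lemma lintegral_tailWeight [IsProbabilityMeasure μ] [NullSingletonClass μ] :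
    ∫⁻ v, tailWeight μ t N v ∂Measure.pi (fun _ => μ) =
      ∫⁻ x in Ioc 0 1, ENNReal.ofReal (N * x ^ (N - 1)) *
        ENNReal.ofReal (-Real.log (max x (cdf' μ t))) ^ N := by
  unfold tailWeight
  rw [lintegral_lintegral_swap (measurable_tailWeight_integrand μ t).aemeasurable]
  refine setLIntegral_congr_fun measurableSet_Ioc fun x hx => ?_
  rw [lintegral_const_mul' _ _ ENNReal.ofReal_ne_top,
    lintegral_pi_prod_comp (invCdfAbove μ t x)
      ((measurable_invCdfAbove μ t).comp measurable_prodMk_left),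
    lintegral_invCdfAbove μ t hx.1, Fintype.card_fin]

lemma indicator_density_eq_indicator_tailWeight [IsProbabilityMeasure μ] (hN : 1 ≤ N)
    (ht : 0 < cdf' μ t) {j : Fin N} (hj : ∀ i, i ≤ j) (v : Fin N → ℝ) :
    {v : Fin N → ℝ | ∀ i, t < v i}.indicator (fun v => ENNReal.ofReal
        (if Antitone v ∧ ∀ i, cdf' μ (v i) ≠ 0 then
          (N : ℝ) ^ N * ∏ i, cdf' μ (v j) / cdf' μ (v i) else 0)) v =
      {v : Fin N → ℝ | Antitone v}.indicator
        (fun v => ENNReal.ofReal ((N : ℝ) ^ N) * tailWeight μ t N v) v := by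
  by_cases hA : ∀ i, t < v i
  · rw [indicator_of_mem (show v ∈ {v : Fin N → ℝ | ∀ i, t < v i} from hA)]
    by_cases hv : Antitone v
    · have hpos (i : Fin N) : cdf' μ (v i) ≠ 0 := (ht.trans_le (monotone_cdf' (hA i).le)).ne'
      rw [indicator_of_mem (show v ∈ {v : Fin N → ℝ | Antitone v} from hv), if_pos ⟨hv, hpos⟩,
        tailWeight_eq_of_isMin μ t hN hA fun i => monotone_cdf' (hv (hj i)),
        ← ENNReal.ofReal_mul (by positivity)]
      simp only [div_eq_mul_inv, Finset.prod_mul_distrib, Finset.prod_const, Finset.card_univ,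
        Fintype.card_fin]
    · rw [indicator_of_notMem (show v ∉ {v : Fin N → ℝ | Antitone v} from hv),
        if_neg fun h => hv h.1, ENNReal.ofReal_zero]
  · obtain ⟨i, hi⟩ := not_forall.1 hA
    rw [indicator_of_notMem (s := {v : Fin N → ℝ | ∀ i, t < v i}) hA, eq_comm,
      indicator_apply_eq_zero, tailWeight_eq_zero μ t (not_lt.1 hi), mul_zero]
    exact fun _ => rfl

end TailWeight

/-- **Probability that all coordinates exceed `t` under `μ_N`.**
Let `μ` be an atomless probability measure on `ℝ` with distribution function `F` and let
`μ_N` be the measure on `ℝ^N` with density `N^N 1_{t_1 ≥ ⋯ ≥ t_N} ∏_i F(t_N)/F(t_i)` with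
respect to `μ^{⊗N}`.  For every `t` with `F(t) > 0`, the `μ_N`-measure of the set of
vectors all of whose coordinates are `> t` equals
`∫_0^{-log F(t)} (N^N/(N-1)!) u^{N-1} e^{-Nu} du`. -/
theorem muN_measure_all_exceed (μ : Measure ℝ) [IsProbabilityMeasure μ] [NullSingletonClass μ]
    (N : ℕ) (hN : 1 ≤ N) (t : ℝ) (ht : 0 < cdf' μ t) :
    ((Measure.pi fun _ : Fin N => μ).withDensity fun v =>
        ENNReal.ofReal
          (if Antitone v ∧ ∀ i : Fin N, cdf' μ (v i) ≠ 0 then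
            (N : ℝ) ^ N * ∏ i : Fin N, cdf' μ (v ⟨N - 1, by omega⟩) / cdf' μ (v i)
          else 0))
      {v : Fin N → ℝ | ∀ i : Fin N, t < v i} =
        ENNReal.ofReal
          (∫ u in (0 : ℝ)..(-Real.log (cdf' μ t)),
            (N : ℝ) ^ N / ((N - 1).factorial : ℝ) * u ^ (N - 1) * Real.exp (-(N : ℝ) * u)) := by
  have hc1 : cdf' μ t ≤ 1 := cdf'_le_one t
  have hA : MeasurableSet {v : Fin N → ℝ | ∀ i, t < v i} := by
    simp only [ofPred_forall]
    exact .iInter fun i => measurableSet_lt measurable_const (measurable_pi_apply i)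
  have hcone := lintegral_pi_eq_factorial_mul_setLIntegral_antitone μ
    (measurable_tailWeight μ t (N := N)) (tailWeight_comp_perm μ t)
  rw [lintegral_tailWeight, lintegral_Ioc_natCast_mul_pow_mul_neg_log_max_pow N ht hc1,
    integral_natCast_mul_pow_mul_neg_log_max_pow hN ht hc1] at hcone
  rw [withDensity_apply _ hA, ← lintegral_indicator hA, lintegral_congr
      (indicator_density_eq_indicator_tailWeight μ t hN ht fun i => Nat.le_sub_one_of_lt i.2),
    lintegral_indicator measurableSet_antitone, lintegral_const_mul _ (measurable_tailWeight μ t)]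
  have hgamma : ∫ u in (0 : ℝ)..(-Real.log (cdf' μ t)),
      (N : ℝ) ^ N / ((N - 1).factorial : ℝ) * u ^ (N - 1) * Real.exp (-(N : ℝ) * u) =
        (N : ℝ) ^ N / N ! *
          ∫ u in (0 : ℝ)..(-Real.log (cdf' μ t)), N * u ^ (N - 1) * Real.exp (-N * u) := by
    simp_rw [mul_assoc, intervalIntegral.integral_const_mul,
      ← Nat.mul_factorial_pred (by omega : N ≠ 0)]
    push_cast
    field_simp
  rw [hgamma, ENNReal.ofReal_mul (by positivity), ENNReal.ofReal_div_of_pos (by positivity),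
    ENNReal.ofReal_natCast, hcone, ← mul_assoc,
    ENNReal.div_mul_cancel (by positivity) (ENNReal.natCast_ne_top _)]
end

section
/- Let μ be an atomless probability measure on ℝ with cumulative distribution function F, let T be a real number with F(T) > 0, and let m be a nonnegative integer. Then ∫_{(T, ∞)} (log F(t))^m / F(t) dμ(t) = −(log F(T))^{m+1}/(m+1) and ∫_{(−∞, T]} F(t)^m dμ(t) = F(T)^{m+1}/(m+1). -/
open MeasureTheory
open scoped ENNReal

/-!
For an atomless probability measure `μ` the distribution function `F` is continuous, so `F` pushes
`μ` forward to the uniform distribution on `[0, 1]` (probability integral transform). Moreover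
`{F ≤ F T}` differs from `(-∞, T]` only by a `μ`-null set. Hence the two integrals become
`∫_0^{F T} u^m du` and `∫_{F T}^1 (log u)^m / u du`; the latter is computed by substituting
`v = log u`.
-/

open Set Filter Topology ProbabilityTheory

theorem integral_log_pow_div {a b : ℝ} (ha : 0 < a) (hb : 0 < b) (m : ℕ) :
    ∫ u in a..b, Real.log u ^ m / u = (Real.log b ^ (m + 1) - Real.log a ^ (m + 1)) / (m + 1) := by
  have hpos : ∀ x ∈ uIcc a b, 0 < x := fun x hx => (lt_min ha hb).trans_le hx.1
  calc ∫ u in a..b, Real.log u ^ m / u = ∫ u in a..b, ((· ^ m) ∘ Real.log) u * u⁻¹ := by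
        simp only [Function.comp_apply, div_eq_mul_inv]
    _ = ∫ v in Real.log a..Real.log b, v ^ m :=
        intervalIntegral.integral_comp_mul_deriv
          (fun x hx => Real.hasDerivAt_log (hpos x hx).ne')
          (continuousOn_inv₀.mono fun x hx => (hpos x hx).ne') (continuous_pow m)
    _ = _ := integral_pow m

namespace ProbabilityTheory

variable (μ : Measure ℝ) [IsProbabilityMeasure μ] [NullSingletonClass μ]

theorem continuous_cdf : Continuous (cdf μ) := by
  refine continuous_iff_continuousAt.2 fun x =>
    continuousAt_iff_continuous_left_right.2 ⟨?_, (cdf μ).right_continuous x⟩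
  rw [← continuousWithinAt_Iio_iff_Iic, (monotone_cdf μ).continuousWithinAt_Iio_iff_leftLim_eq]
  have h := (cdf μ).measure_singleton x
  rw [measure_cdf, measure_singleton, eq_comm, ENNReal.ofReal_eq_zero, sub_nonpos] at h
  exact le_antisymm ((monotone_cdf μ).leftLim_le le_rfl) h

theorem exists_preimage_cdf_Iic_eq_Iic {u : ℝ} (hu : u < 1) (hne : (cdf μ ⁻¹' Iic u).Nonempty) :
    ∃ s, cdf μ ⁻¹' Iic u = Iic s ∧ cdf μ s = u := by
  set S := cdf μ ⁻¹' Iic u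
  have hbdd : BddAbove S := by
    obtain ⟨b, hb⟩ :=
      ((tendsto_cdf_atTop μ).eventually (eventually_gt_nhds hu)).exists_forall_of_atTop
    exact ⟨b, fun t ht => le_of_not_gt fun hbt => (hb t hbt.le).not_ge ht⟩
  have hmem : sSup S ∈ S := (isClosed_Iic.preimage (continuous_cdf μ)).csSup_mem hne hbdd
  have hS : S = Iic (sSup S) :=
    Subset.antisymm (fun t ht => le_csSup hbdd ht) fun t ht => (monotone_cdf μ ht).trans hmem
  refine ⟨sSup S, hS, le_antisymm hmem ?_⟩
  refine ge_of_tendsto ((continuous_cdf μ).continuousWithinAt (s := Ioi (sSup S))).tendsto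
    (eventually_nhdsWithin_of_forall fun t ht => le_of_lt (not_le.mp fun h => ?_))
  exact not_le.mpr ht (mem_Iic.mp (hS.subset h))

theorem measure_preimage_cdf_Iic {u : ℝ} (hu : u ≤ 1) :
    μ (cdf μ ⁻¹' Iic u) = ENNReal.ofReal u := by
  rcases hu.lt_or_eq with hu | rfl
  · rcases (cdf μ ⁻¹' Iic u).eq_empty_or_nonempty with hempty | hne
    · have hu0 : u ≤ 0 := ge_of_tendsto' (tendsto_cdf_atBot μ) fun t =>
        le_of_lt (not_le.mp fun h => eq_empty_iff_forall_notMem.mp hempty t h)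
      rw [hempty, measure_empty, ENNReal.ofReal_of_nonpos hu0]
    · obtain ⟨s, hS, hs⟩ := exists_preimage_cdf_Iic_eq_Iic μ hu hne
      rw [hS, ← ofReal_cdf, hs]
  · have huniv : cdf μ ⁻¹' Iic 1 = univ := eq_univ_of_forall (cdf_le_one μ)
    rw [huniv, measure_univ, ENNReal.ofReal_one]

theorem map_cdf : μ.map (cdf μ) = volume.restrict (Icc 0 1) := by
  refine Measure.ext_of_Iic _ _ fun u => ?_
  have hclamp : cdf μ ⁻¹' Iic u = cdf μ ⁻¹' Iic (min u 1) := by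
    ext t; simp [cdf_le_one μ t]
  rw [Measure.map_apply (monotone_cdf μ).measurable measurableSet_Iic, hclamp,
    measure_preimage_cdf_Iic μ (min_le_right u 1), Measure.restrict_apply measurableSet_Iic,
    ← Ici_inter_Iic, inter_left_comm, Iic_inter_Iic, Ici_inter_Iic, Real.volume_Icc, sub_zero]

theorem preimage_cdf_Iic_ae_eq (T : ℝ) : cdf μ ⁻¹' Iic (cdf μ T) =ᵐ[μ] Iic T :=
  (ae_eq_of_subset_of_measure_ge (fun _ ht => monotone_cdf μ ht)
    ((measure_preimage_cdf_Iic μ (cdf_le_one μ T)).trans (ofReal_cdf μ T)).le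
    measurableSet_Iic.nullMeasurableSet (measure_ne_top _ _)).symm

variable {E : Type*} [NormedAddCommGroup E] [NormedSpace ℝ E] {g : ℝ → E}

theorem setIntegral_preimage_cdf {s : Set ℝ} (hs : MeasurableSet s)
    (hg : AEStronglyMeasurable g (volume.restrict (Icc 0 1))) :
    ∫ t in cdf μ ⁻¹' s, g (cdf μ t) ∂μ = ∫ u in s ∩ Icc 0 1, g u := by
  rw [← setIntegral_map hs (map_cdf μ ▸ hg) (monotone_cdf μ).measurable.aemeasurable, map_cdf,
    Measure.restrict_restrict hs]

theorem setIntegral_Iic_comp_cdf (hg : AEStronglyMeasurable g (volume.restrict (Icc 0 1)))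
    (T : ℝ) : ∫ t in Iic T, g (cdf μ t) ∂μ = ∫ u in 0..cdf μ T, g u := by
  rw [setIntegral_congr_set (preimage_cdf_Iic_ae_eq μ T).symm,
    setIntegral_preimage_cdf μ measurableSet_Iic hg, ← Ici_inter_Iic, inter_left_comm,
    Iic_inter_Iic, Ici_inter_Iic, min_eq_left (cdf_le_one μ T), integral_Icc_eq_integral_Ioc,
    intervalIntegral.integral_of_le (cdf_nonneg μ T)]

theorem setIntegral_Ioi_comp_cdf (hg : AEStronglyMeasurable g (volume.restrict (Icc 0 1)))
    (T : ℝ) : ∫ t in Ioi T, g (cdf μ t) ∂μ = ∫ u in cdf μ T..1, g u := by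
  have hIoi : cdf μ ⁻¹' Ioi (cdf μ T) =ᵐ[μ] Ioi T := by
    simpa only [← preimage_compl, compl_Iic] using (preimage_cdf_Iic_ae_eq μ T).compl
  have hinter : Ioi (cdf μ T) ∩ Icc 0 1 = Ioc (cdf μ T) 1 := by
    rw [← Ici_inter_Iic, inter_left_comm, Ioi_inter_Iic]
    exact inter_eq_right.2 fun x hx => (cdf_nonneg μ T).trans hx.1.le
  rw [setIntegral_congr_set hIoi.symm, setIntegral_preimage_cdf μ measurableSet_Ioi hg, hinter,
    intervalIntegral.integral_of_le (cdf_le_one μ T)]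

end ProbabilityTheory

/-- **Two integral identities for distribution functions.**
Let `μ` be an atomless probability measure on `ℝ` with distribution function `F`, `T` a
real number with `F(T) > 0`, and `m ∈ ℕ`.  Then
`∫_{(T,∞)} (log F(t))^m / F(t) dμ(t) = -(log F(T))^{m+1}/(m+1)` and
`∫_{(-∞,T]} F(t)^m dμ(t) = F(T)^{m+1}/(m+1)`. -/
theorem integral_log_cdf_pow (μ : Measure ℝ) [IsProbabilityMeasure μ] [NullSingletonClass μ]
    (T : ℝ) (hT : 0 < cdf' μ T) (m : ℕ) :
    (∫ t in Set.Ioi T, (Real.log (cdf' μ t)) ^ m / cdf' μ t ∂μ) =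
        -((Real.log (cdf' μ T)) ^ (m + 1) / (m + 1)) ∧
    (∫ t in Set.Iic T, (cdf' μ t) ^ m ∂μ) = (cdf' μ T) ^ (m + 1) / (m + 1) := by
  have hF : cdf' μ = cdf μ := funext fun x => (cdf_eq_real μ x).symm
  rw [hF] at hT ⊢
  constructor
  · rw [setIntegral_Ioi_comp_cdf μ (g := fun u => Real.log u ^ m / u)
      ((Real.measurable_log.pow_const m).div measurable_id).aestronglyMeasurable T,
      integral_log_pow_div hT one_pos, Real.log_one]
    simp [neg_div]
  · rw [setIntegral_Iic_comp_cdf μ (g := fun u => u ^ m) (by fun_prop) T, integral_pow]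
    simp
end
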